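/- arXiv:1208.6424 — 3 statements merged into one kernel-verified Lean document; each statement's English description precedes it below -/
import Mathlib

section
/- In the q-Brauer algebra Br_n(r,q), the element e_{(2)} satisfies e_{(2)} = e g_2^{-1} g_1^{-1} g_3 g_2 e, i.e., e(g_2 g_3 g_1^{-1} g_2^{-1})e = e(g_2^{-1} g_1^{-1} g_3 g_2)e. -/
/-- The `q`-Brauer algebra `Br_n(r, q)` (in the sense of Wenzl): an algebra `A` over a commutative
ring `R` with invertible parameters `q`, `r` and `δ = (r−1)/(q−1)`, with generators
`g_1, …, g_{n-1}` (with inverses) and `e`, subject to the Hecke relations (H) for the `g_i`,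
`(E₁)`: `e² = ((r−1)/(q−1)) e`, `(E₂)`: `e g_i = g_i e` for `i > 2`, `e g_1 = g_1 e = q e`,
`e g_2 e = r e`, `e g_2⁻¹ e = q⁻¹ e`, and `(E₃)` involving
`e_{(2)} = e (g_2 g_3 g_1⁻¹ g_2⁻¹) e`. -/
structure QBrauer (R : Type) [CommRing R] (q r δ : Rˣ) (n : ℕ)
    (A : Type) [Ring A] [Algebra R A] where
  g : ℕ → A
  ginv : ℕ → A
  e : A
  param : ((q : R) - 1) * (δ : R) = (r : R) - 1
  mul_ginv : ∀ i, 1 ≤ i → i < n → g i * ginv i = 1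
  ginv_mul : ∀ i, 1 ≤ i → i < n → ginv i * g i = 1
  braid : ∀ i, 1 ≤ i → i + 1 < n → g i * g (i+1) * g i = g (i+1) * g i * g (i+1)
  gcomm : ∀ i j, 1 ≤ i → i + 1 < j → j < n → g i * g j = g j * g i
  quad : ∀ i, 1 ≤ i → i < n → g i * g i = ((q : R) - 1) • g i + (q : R) • (1 : A)
  esq : e * e = (δ : R) • e
  e_g : ∀ i, 2 < i → i < n → e * g i = g i * e
  e_g1 : e * g 1 = (q : R) • e
  g1_e : g 1 * e = (q : R) • e
  e_g2_e : e * g 2 * e = (r : R) • e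
  e_g2inv_e : e * ginv 2 * e = ((q⁻¹ : Rˣ) : R) • e
  E3_left : 4 ≤ n →
    g 2 * g 3 * ginv 1 * ginv 2 * (e * (g 2 * g 3 * ginv 1 * ginv 2) * e)
      = e * (g 2 * g 3 * ginv 1 * ginv 2) * e
  E3_right : 4 ≤ n →
    (e * (g 2 * g 3 * ginv 1 * ginv 2) * e) * (g 2 * g 3 * ginv 1 * ginv 2)
      = e * (g 2 * g 3 * ginv 1 * ginv 2) * e

variable {R : Type} [CommRing R] {q r δ : Rˣ} {n : ℕ} {A : Type} [Ring A] [Algebra R A]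

/-- `g⁺_{l,m} = g_l g_{l+1} ⋯ g_m` (for `l ≤ m`; ascending indices). -/
def gp (b : QBrauer R q r δ n A) (l m : ℕ) : A :=
  ((List.range' l (m + 1 - l)).map b.g).prod

/-- `g⁻_{l,m} = g_l⁻¹ g_{l+1}⁻¹ ⋯ g_m⁻¹` (for `l ≤ m`; ascending indices). -/
def gm (b : QBrauer R q r δ n A) (l m : ℕ) : A :=
  ((List.range' l (m + 1 - l)).map b.ginv).prod

/-- `g⁺_{m,l} = g_m g_{m-1} ⋯ g_l` (for `m ≥ l`; descending indices). -/
def gpd (b : QBrauer R q r δ n A) (m l : ℕ) : A :=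
  (((List.range' l (m + 1 - l)).map b.g).reverse).prod

/-- `g⁻_{m,l} = g_m⁻¹ g_{m-1}⁻¹ ⋯ g_l⁻¹` (for `m ≥ l`; descending indices). -/
def gmd (b : QBrauer R q r δ n A) (m l : ℕ) : A :=
  (((List.range' l (m + 1 - l)).map b.ginv).reverse).prod

/-- The elements `e_{(k)}`, defined inductively by `e_{(1)} = e` and
`e_{(k+1)} = e g⁺_{2,2k+1} g⁻_{1,2k} e_{(k)}`. -/
def ee (b : QBrauer R q r δ n A) : ℕ → A
  | 0 => 1
  | 1 => b.e
  | (k+2) => b.e * gp b 2 (2*(k+1)+1) * gm b 1 (2*(k+1)) * ee b (k+1)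

/-! Substitute the Hecke relation `g_2 = (q - 1) + q g_2⁻¹` for the outer `g_2` of both words.
The `q`-parts agree because `g_3` commutes with `g_1⁻¹`; each `(q - 1)`-part collapses to
`q⁻² g_3 e`, since `g_1⁻¹` is absorbed by `e` with a factor `q⁻¹`, `g_3` commutes with `e`,
and `e g_2⁻¹ e = q⁻¹ e`. -/

namespace QBrauer

variable (b : QBrauer R q r δ n A)

theorem g_eq_smul_one_add_smul_ginv {i : ℕ} (hi : 1 ≤ i) (hin : i < n) :
    b.g i = ((q : R) - 1) • (1 : A) + (q : R) • b.ginv i :=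
  calc b.g i = b.g i * b.g i * b.ginv i := by rw [mul_assoc, b.mul_ginv i hi hin, mul_one]
    _ = ((q : R) - 1) • (1 : A) + (q : R) • b.ginv i := by
      rw [b.quad i hi hin, add_mul, smul_mul_assoc, smul_mul_assoc, b.mul_ginv i hi hin, one_mul]

theorem commute_g_ginv {i j : ℕ} (hi : 1 ≤ i) (hij : i + 1 < j) (hjn : j < n) :
    Commute (b.g j) (b.ginv i) :=
  Commute.units_inv_right (u := ⟨b.g i, b.ginv i, b.mul_ginv i hi (by omega),
    b.ginv_mul i hi (by omega)⟩) (b.gcomm i j hi hij hjn).symm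

theorem e_mul_ginv_one (hn : 1 < n) : b.e * b.ginv 1 = ((q⁻¹ : Rˣ) : R) • b.e := by
  rw [← one_smul R (b.e * b.ginv 1), ← q.inv_mul, mul_smul, ← smul_mul_assoc, ← b.e_g1,
    mul_assoc, b.mul_ginv 1 le_rfl hn, mul_one]

theorem ginv_one_mul_e (hn : 1 < n) : b.ginv 1 * b.e = ((q⁻¹ : Rˣ) : R) • b.e := by
  rw [← one_smul R (b.ginv 1 * b.e), ← q.inv_mul, mul_smul, ← mul_smul_comm, ← b.g1_e,
    ← mul_assoc, b.ginv_mul 1 le_rfl hn, one_mul]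

theorem ee_two : ee b 2 = b.e * (b.g 2 * b.g 3) * (b.ginv 1 * b.ginv 2) * b.e := by
  simp [ee, gp, gm, List.range']

theorem e_mul_ginv_one_mul_g_three_mul_ginv_two_mul_e (hn : 3 < n) :
    b.e * b.ginv 1 * b.g 3 * b.ginv 2 * b.e = ((q⁻¹ : Rˣ) : R) ^ 2 • (b.g 3 * b.e) := by
  rw [b.e_mul_ginv_one (by omega), smul_mul_assoc, smul_mul_assoc, smul_mul_assoc,
    b.e_g 3 (by omega) (by omega), mul_assoc (b.g 3), mul_assoc (b.g 3), b.e_g2inv_e,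
    mul_smul_comm, smul_smul, sq]

theorem e_mul_ginv_two_mul_ginv_one_mul_g_three_mul_e (hn : 3 < n) :
    b.e * b.ginv 2 * b.ginv 1 * b.g 3 * b.e = ((q⁻¹ : Rˣ) : R) ^ 2 • (b.g 3 * b.e) := by
  rw [mul_assoc _ (b.ginv 1), ← (b.commute_g_ginv le_rfl (by omega) (by omega)).eq, ← mul_assoc,
    mul_assoc _ (b.ginv 1), b.ginv_one_mul_e (by omega), mul_smul_comm, mul_assoc _ (b.g 3),
    ← b.e_g 3 (by omega) (by omega), ← mul_assoc, b.e_g2inv_e, smul_mul_assoc,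
    b.e_g 3 (by omega) (by omega), smul_smul, sq]

end QBrauer

/-- `e_{(2)} = e g_2⁻¹ g_1⁻¹ g_3 g_2 e`, i.e.
`e (g_2 g_3 g_1⁻¹ g_2⁻¹) e = e (g_2⁻¹ g_1⁻¹ g_3 g_2) e`. -/
theorem ee_two_alt (b : QBrauer R q r δ n A) (hn : 4 ≤ n) :
    ee b 2 = b.e * b.ginv 2 * b.ginv 1 * b.g 3 * b.g 2 * b.e := by
  have hg2 := b.g_eq_smul_one_add_smul_ginv (i := 2) (by omega) (by omega)
  have g3_ginv1 := (b.commute_g_ginv (i := 1) (j := 3) le_rfl (by omega) (by omega)).eq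
  rw [b.ee_two, hg2]
  simp only [add_mul, mul_add, smul_mul_assoc, mul_smul_comm, one_mul, mul_one, mul_assoc]
  rw [← mul_assoc (b.g 3) (b.ginv 1), g3_ginv1]
  simp only [← mul_assoc]
  rw [b.e_mul_ginv_one_mul_g_three_mul_ginv_two_mul_e (by omega),
    b.e_mul_ginv_two_mul_ginv_one_mul_g_three_mul_e (by omega)]
end

section
/- In the q-Brauer algebra, for j ≤ k the elements e_{(j)} and e_{(k)} commute and satisfy e_{(j)} e_{(k)} = e_{(k)} e_{(j)} = ((r−1)/(q−1))^j e_{(k)}. -/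
variable {R : Type} [CommRing R] {q r δ : Rˣ} {n : ℕ} {A : Type} [Ring A] [Algebra R A]

/-! The elements `t_i = g_{2i+2} g_{2i+3} g_{2i+1}⁻¹ g_{2i+2}⁻¹` (`pairSwap i`) satisfy the braid
relations, and `g⁺_{2,2j+1} g⁻_{1,2j} = t_0 t_1 ⋯ t_{j-1}`, so that
`e_{(j+1)} = e t_0 ⋯ t_{j-1} e_{(j)}`. Since `e` commutes with `t_1, t_2, …`, every `e_{(k)}` with
`k ≥ 2` begins with `e t_0 e`, which absorbs `t_0` from the left by (E₃). Moving `t_{i+1}` through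
`t_0 ⋯ t_m` turns it into `t_i`, so by induction every `t_i` with `i + 2 ≤ k` is absorbed by
`e_{(k)}`. Hence `t_0 ⋯ t_{j-1} e_{(k)} = e_{(k)}` for `j < k`, and
`e_{(j+1)} e_{(k)} = δ^j e t_0 ⋯ t_{j-1} e_{(k)} = δ^{j+1} e_{(k)}`. -/

section BraidGroup

variable {G : Type*} [Group G]

theorem mul_mul_inv_eq_of_braid {x y : G} (h : x * y * x = y * x * y) :
    (x * y) * x * (x * y)⁻¹ = y := by
  rw [h]
  group

theorem conj_mul_inv_mul_mul_inv (X p q r : G) :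
    X * (p * q⁻¹ * r * p⁻¹) * X⁻¹
      = (X * p * X⁻¹) * (X * q * X⁻¹)⁻¹ * (X * r * X⁻¹) * (X * p * X⁻¹)⁻¹ := by
  group

theorem braid_conj_dcba {a b c d : G}
    (hab : a * b * a = b * a * b) (hbc : b * c * b = c * b * c) (hcd : c * d * c = d * c * d)
    (hac : Commute a c) (had : Commute a d) (hbd : Commute b d) :
    (d * c * b * a) * (c * b⁻¹ * d * c⁻¹) * (d * c * b * a)⁻¹ = b * c * a⁻¹ * b⁻¹ := by
  have hc : (d * c * b * a) * c * (d * c * b * a)⁻¹ = b := by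
    rw [show (d * c * b * a) * c * (d * c * b * a)⁻¹
        = d * ((c * b) * (a * c * a⁻¹) * (c * b)⁻¹) * d⁻¹ by group,
      hac.mul_inv_cancel, mul_mul_inv_eq_of_braid hbc.symm, hbd.symm.mul_inv_cancel]
  have hb : (d * c * b * a) * b * (d * c * b * a)⁻¹ = a := by
    rw [show (d * c * b * a) * b * (d * c * b * a)⁻¹
        = d * (c * ((b * a) * b * (b * a)⁻¹) * c⁻¹) * d⁻¹ by group,
      mul_mul_inv_eq_of_braid hab.symm, hac.symm.mul_inv_cancel, had.symm.mul_inv_cancel]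
  have hd : (d * c * b * a) * d * (d * c * b * a)⁻¹ = c := by
    rw [show (d * c * b * a) * d * (d * c * b * a)⁻¹
        = (d * c) * (b * (a * d * a⁻¹) * b⁻¹) * (d * c)⁻¹ by group,
      had.mul_inv_cancel, hbd.mul_inv_cancel, mul_mul_inv_eq_of_braid hcd.symm]
  rw [conj_mul_inv_mul_mul_inv, hc, hb, hd, mul_assoc b, hac.inv_left.eq, ← mul_assoc]

theorem braid_conj_bcdf {b c d f : G}
    (hbc : b * c * b = c * b * c) (hcd : c * d * c = d * c * d) (hdf : d * f * d = f * d * f)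
    (hbd : Commute b d) (hbf : Commute b f) (hcf : Commute c f) :
    (b * c * d * f) * (c * b⁻¹ * d * c⁻¹) * (b * c * d * f)⁻¹ = d * f * c⁻¹ * d⁻¹ := by
  have hc : (b * c * d * f) * c * (b * c * d * f)⁻¹ = d := by
    rw [show (b * c * d * f) * c * (b * c * d * f)⁻¹
        = b * ((c * d) * (f * c * f⁻¹) * (c * d)⁻¹) * b⁻¹ by group,
      hcf.symm.mul_inv_cancel, mul_mul_inv_eq_of_braid hcd, hbd.mul_inv_cancel]
  have hb : (b * c * d * f) * b * (b * c * d * f)⁻¹ = c := by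
    rw [show (b * c * d * f) * b * (b * c * d * f)⁻¹
        = (b * c) * (d * (f * b * f⁻¹) * d⁻¹) * (b * c)⁻¹ by group,
      hbf.symm.mul_inv_cancel, hbd.symm.mul_inv_cancel, mul_mul_inv_eq_of_braid hbc]
  have hd : (b * c * d * f) * d * (b * c * d * f)⁻¹ = f := by
    rw [show (b * c * d * f) * d * (b * c * d * f)⁻¹
        = b * (c * ((d * f) * d * (d * f)⁻¹) * c⁻¹) * b⁻¹ by group,
      mul_mul_inv_eq_of_braid hdf, hcf.mul_inv_cancel, hbf.mul_inv_cancel]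
  rw [conj_mul_inv_mul_mul_inv, hc, hb, hd, mul_assoc d, hcf.inv_left.eq, ← mul_assoc]

/-- Conjugation by `A = d c b a` resp. `B = b c d f` sends `s = c b⁻¹ d c⁻¹` to
`t = b c a⁻¹ b⁻¹` resp. `u = d f c⁻¹ d⁻¹`, and `t u = B A⁻¹`; hence `t u t = B s A⁻¹ = u t u`. -/
theorem braid_mul_mul_inv_mul_inv {a b c d f : G}
    (hab : a * b * a = b * a * b) (hbc : b * c * b = c * b * c) (hcd : c * d * c = d * c * d)
    (hdf : d * f * d = f * d * f) (hac : Commute a c) (had : Commute a d) (haf : Commute a f)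
    (hbd : Commute b d) (hbf : Commute b f) (hcf : Commute c f) :
    (b * c * a⁻¹ * b⁻¹) * (d * f * c⁻¹ * d⁻¹) * (b * c * a⁻¹ * b⁻¹)
      = (d * f * c⁻¹ * d⁻¹) * (b * c * a⁻¹ * b⁻¹) * (d * f * c⁻¹ * d⁻¹) := by
  have ht := braid_conj_dcba hab hbc hcd hac had hbd
  have hu := braid_conj_bcdf hbc hcd hdf hbd hbf hcf
  have htu : (b * c * a⁻¹ * b⁻¹) * (d * f * c⁻¹ * d⁻¹) = (b * c * d * f) * (d * c * b * a)⁻¹ := by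
    have h : Commute (b * a)⁻¹ (d * f) :=
      ((hbd.mul_right hbf).mul_left (had.mul_right haf)).inv_left
    calc (b * c * a⁻¹ * b⁻¹) * (d * f * c⁻¹ * d⁻¹)
        = b * c * ((b * a)⁻¹ * (d * f)) * (d * c)⁻¹ := by group
      _ = (b * c * d * f) * (d * c * b * a)⁻¹ := by rw [h.eq]; group
  generalize b * c * a⁻¹ * b⁻¹ = t at ht htu ⊢
  generalize d * f * c⁻¹ * d⁻¹ = u at hu htu ⊢
  generalize d * c * b * a = A at ht htu
  generalize b * c * d * f = B at hu htu
  generalize c * b⁻¹ * d * c⁻¹ = s at ht hu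
  calc t * u * t = B * A⁻¹ * (A * s * A⁻¹) := by rw [htu, ht]
    _ = B * s * B⁻¹ * (B * A⁻¹) := by group
    _ = u * t * u := by rw [hu, ← htu, mul_assoc]

end BraidGroup

namespace QBrauer

variable (b : QBrauer R q r δ n A)

/-- `g_i` as a unit, extended by `1` outside `1 ≤ i < n`, so that the commutation relations
hold for all indices. -/
def gUnit (i : ℕ) : Aˣ :=
  if h : 1 ≤ i ∧ i < n then ⟨b.g i, b.ginv i, b.mul_ginv i h.1 h.2, b.ginv_mul i h.1 h.2⟩ else 1

theorem val_gUnit {i : ℕ} (h1 : 1 ≤ i) (h2 : i < n) : (b.gUnit i : A) = b.g i := by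
  simp [gUnit, h1, h2]

theorem val_gUnit_inv {i : ℕ} (h1 : 1 ≤ i) (h2 : i < n) : ((b.gUnit i)⁻¹ : Aˣ) = b.ginv i := by
  simp [gUnit, h1, h2]

theorem gUnit_braid {i : ℕ} (h1 : 1 ≤ i) (h2 : i + 1 < n) :
    b.gUnit i * b.gUnit (i + 1) * b.gUnit i = b.gUnit (i + 1) * b.gUnit i * b.gUnit (i + 1) :=
  Units.ext <| by
    simpa only [Units.val_mul, b.val_gUnit h1 (by omega), b.val_gUnit (by omega) h2]
      using b.braid i h1 h2

theorem commute_gUnit {i j : ℕ} (h : i + 1 < j) : Commute (b.gUnit i) (b.gUnit j) := by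
  unfold gUnit
  split_ifs with hi hj hj
  · exact Units.ext (b.gcomm i j hi.1 h hj.2)
  all_goals simp

theorem commute_e_gUnit {i : ℕ} (h : 2 < i) : Commute b.e (b.gUnit i : A) := by
  unfold gUnit
  split_ifs with hi
  · exact b.e_g i h hi.2
  · exact Commute.one_right _

/-- `pairSwap 0 = g_2 g_3 g_1⁻¹ g_2⁻¹` is the element of relation (E₃); `pairSwap i` is its
shift by `2 i`. -/
def pairSwap (i : ℕ) : Aˣ :=
  b.gUnit (2 * i + 2) * b.gUnit (2 * i + 3) * (b.gUnit (2 * i + 1))⁻¹ * (b.gUnit (2 * i + 2))⁻¹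

theorem val_pairSwap {i : ℕ} (h : 2 * i + 3 < n) :
    (b.pairSwap i : A)
      = b.g (2 * i + 2) * b.g (2 * i + 3) * b.ginv (2 * i + 1) * b.ginv (2 * i + 2) := by
  simp only [pairSwap, Units.val_mul, b.val_gUnit (by omega) (by omega : 2 * i + 2 < n),
    b.val_gUnit (by omega) h, b.val_gUnit_inv (by omega) (by omega : 2 * i + 1 < n),
    b.val_gUnit_inv (by omega) (by omega : 2 * i + 2 < n)]

theorem pairSwap_braid {i : ℕ} (h : 2 * i + 5 < n) :
    b.pairSwap i * b.pairSwap (i + 1) * b.pairSwap i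
      = b.pairSwap (i + 1) * b.pairSwap i * b.pairSwap (i + 1) := by
  have hc {x y : ℕ} (hxy : x + 1 < y) := b.commute_gUnit hxy
  simp only [pairSwap, show 2 * (i + 1) + 1 = 2 * i + 3 by ring,
    show 2 * (i + 1) + 2 = 2 * i + 4 by ring, show 2 * (i + 1) + 3 = 2 * i + 5 by ring]
  exact braid_mul_mul_inv_mul_inv (b.gUnit_braid (by omega) (by omega))
    (b.gUnit_braid (by omega) (by omega)) (b.gUnit_braid (by omega) (by omega))
    (b.gUnit_braid (by omega) (by omega)) (hc (by omega)) (hc (by omega)) (hc (by omega))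
    (hc (by omega)) (hc (by omega)) (hc (by omega))

theorem commute_pairSwap_gUnit {i j : ℕ} (h : 2 * i + 4 < j) :
    Commute (b.pairSwap i) (b.gUnit j) :=
  (((b.commute_gUnit (by omega)).mul_left (b.commute_gUnit (by omega))).mul_left
    (b.commute_gUnit (by omega)).inv_left).mul_left (b.commute_gUnit (by omega)).inv_left

theorem commute_pairSwap {i l : ℕ} (h : i + 2 ≤ l) : Commute (b.pairSwap i) (b.pairSwap l) :=
  (((b.commute_pairSwap_gUnit (by omega)).mul_right (b.commute_pairSwap_gUnit (by omega))).mul_right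
    (b.commute_pairSwap_gUnit (by omega)).inv_right).mul_right
    (b.commute_pairSwap_gUnit (by omega)).inv_right

theorem commute_e_pairSwap {i : ℕ} (h : 1 ≤ i) : Commute b.e (b.pairSwap i : A) := by
  simp only [pairSwap, Units.val_mul]
  exact (((b.commute_e_gUnit (by omega)).mul_right (b.commute_e_gUnit (by omega))).mul_right
    (b.commute_e_gUnit (by omega)).units_inv_right).mul_right
    (b.commute_e_gUnit (by omega)).units_inv_right

def pairSwapProd (j : ℕ) : Aˣ :=
  ((List.range j).map b.pairSwap).prod

theorem pairSwapProd_succ (j : ℕ) : b.pairSwapProd (j + 1) = b.pairSwapProd j * b.pairSwap j :=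
  List.prod_range_succ _ _

theorem commute_pairSwap_pairSwapProd {i j : ℕ} (h : j + 1 ≤ i) :
    Commute (b.pairSwap i) (b.pairSwapProd j) :=
  Commute.list_prod_right _ _ <| by
    simp only [List.mem_map, List.mem_range, forall_exists_index, and_imp]
    rintro _ l hl rfl
    exact (b.commute_pairSwap (by omega)).symm

theorem pairSwap_succ_mul_pairSwapProd {i m : ℕ} (him : i < m) (hm : 2 * m + 3 < n) :
    b.pairSwap (i + 1) * b.pairSwapProd (m + 1) = b.pairSwapProd (m + 1) * b.pairSwap i := by
  induction m, him using Nat.le_induction with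
  | base =>
    have hc := b.commute_pairSwap_pairSwapProd (le_refl (i + 1))
    rw [pairSwapProd_succ, pairSwapProd_succ]
    calc b.pairSwap (i + 1) * (b.pairSwapProd i * b.pairSwap i * b.pairSwap (i + 1))
        = b.pairSwapProd i * (b.pairSwap (i + 1) * b.pairSwap i * b.pairSwap (i + 1)) := by
          rw [← mul_assoc, ← mul_assoc, hc.eq]; simp only [mul_assoc]
      _ = b.pairSwapProd i * b.pairSwap i * b.pairSwap (i + 1) * b.pairSwap i := by
          rw [← b.pairSwap_braid (by omega)]; simp only [mul_assoc]
  | succ m him ih =>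
    rw [pairSwapProd_succ, ← mul_assoc, ih (by omega), mul_assoc,
      (b.commute_pairSwap (by omega : i + 2 ≤ m + 1)).eq, mul_assoc]

theorem gp_succ {l m : ℕ} (h : l ≤ m + 1) : gp b l (m + 1) = gp b l m * b.g (m + 1) := by
  rw [gp, gp, show m + 1 + 1 - l = m + 1 - l + 1 by omega, List.range'_concat, List.map_append,
    List.prod_append]
  simp only [List.map_cons, List.map_nil, List.prod_cons, List.prod_nil, mul_one]
  congr 2
  omega

theorem gm_succ {l m : ℕ} (h : l ≤ m + 1) : gm b l (m + 1) = gm b l m * b.ginv (m + 1) := by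
  rw [gm, gm, show m + 1 + 1 - l = m + 1 - l + 1 by omega, List.range'_concat, List.map_append,
    List.prod_append]
  simp only [List.map_cons, List.map_nil, List.prod_cons, List.prod_nil, mul_one]
  congr 2
  omega

theorem commute_g_gm {i m : ℕ} (h : m + 1 < i) (hi : i < n) : Commute (b.g i) (gm b 1 m) :=
  Commute.list_prod_right _ _ <| by
    simp only [List.mem_map, List.mem_range', forall_exists_index, and_imp]
    rintro _ k l hl rfl rfl
    rw [← b.val_gUnit (by omega) hi, ← b.val_gUnit_inv (by omega) (by omega)]
    exact ((b.commute_gUnit (by omega)).symm.inv_right).units_val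

theorem gp_mul_gm (j : ℕ) (hj : 2 * j + 1 < n) :
    gp b 2 (2 * j + 1) * gm b 1 (2 * j) = b.pairSwapProd j := by
  induction j with
  | zero => simp [gp, gm, pairSwapProd]
  | succ j ih =>
    have hc : Commute (b.g (2 * j + 2) * b.g (2 * j + 3)) (gm b 1 (2 * j)) :=
      (b.commute_g_gm (by omega) (by omega)).mul_left (b.commute_g_gm (by omega) (by omega))
    rw [show 2 * (j + 1) + 1 = 2 * j + 2 + 1 by ring, gp_succ _ (by omega), gp_succ _ (by omega),
      show 2 * (j + 1) = 2 * j + 1 + 1 by ring, gm_succ _ (by omega), gm_succ _ (by omega),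
      pairSwapProd_succ, Units.val_mul, ← ih (by omega), b.val_pairSwap (by omega)]
    calc gp b 2 (2 * j + 1) * b.g (2 * j + 2) * b.g (2 * j + 3)
          * (gm b 1 (2 * j) * b.ginv (2 * j + 1) * b.ginv (2 * j + 2))
        = gp b 2 (2 * j + 1) * ((b.g (2 * j + 2) * b.g (2 * j + 3)) * gm b 1 (2 * j))
          * (b.ginv (2 * j + 1) * b.ginv (2 * j + 2)) := by simp only [mul_assoc]
      _ = _ := by rw [hc.eq]; simp only [mul_assoc]

theorem commute_e_prod_pairSwap_succ (m : ℕ) :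
    Commute b.e ↑((List.range m).map fun l => b.pairSwap (l + 1)).prod := by
  induction m with
  | zero => exact Commute.one_right _
  | succ m ih =>
    rw [List.prod_range_succ, Units.val_mul]
    exact ih.mul_right (b.commute_e_pairSwap (by omega))

theorem ee_succ (j : ℕ) (hj : 2 * (j + 1) ≤ n) :
    ee b (j + 1) = b.e * b.pairSwapProd j * ee b j := by
  cases j with
  | zero => simp [ee, pairSwapProd]
  | succ m =>
    rw [← b.gp_mul_gm (m + 1) (by omega), ← mul_assoc]
    rfl

theorem e_mul_ee : ∀ {k : ℕ}, 1 ≤ k → b.e * ee b k = (δ : R) • ee b k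
  | 1, _ => b.esq
  | _ + 2, _ => by simp only [ee, ← mul_assoc, b.esq, smul_mul_assoc]

theorem ee_add_two (m : ℕ) (hm : 2 * (m + 2) ≤ n) :
    ee b (m + 2) = b.e * b.pairSwap 0 * b.e
      * (↑((List.range m).map fun l => b.pairSwap (l + 1)).prod * b.pairSwapProd m * ee b m) := by
  rw [b.ee_succ (m + 1) hm, b.ee_succ m (by omega), pairSwapProd.eq_1 b (m + 1),
    List.prod_range_succ', Units.val_mul]
  simp only [mul_assoc]
  rw [← mul_assoc (_ : Aˣ).val b.e, ← (b.commute_e_prod_pairSwap_succ m).eq]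
  simp only [mul_assoc]

theorem pairSwap_zero_mul_ee {m : ℕ} (hm : 2 * (m + 2) ≤ n) :
    b.pairSwap 0 * ee b (m + 2) = ee b (m + 2) := by
  have hE3 : b.pairSwap 0 * (b.e * b.pairSwap 0 * b.e) = b.e * b.pairSwap 0 * b.e := by
    rw [b.val_pairSwap (by omega)]
    exact b.E3_left (by omega)
  rw [b.ee_add_two m hm, ← mul_assoc, hE3]

theorem pairSwap_mul_ee {i k : ℕ} (hik : i + 2 ≤ k) (hkn : 2 * k ≤ n) :
    b.pairSwap i * ee b k = ee b k := by
  induction i generalizing k with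
  | zero =>
    obtain ⟨m, rfl⟩ : ∃ m, k = m + 2 := ⟨k - 2, by omega⟩
    exact b.pairSwap_zero_mul_ee hkn
  | succ i ih =>
    obtain ⟨m, rfl⟩ : ∃ m, k = m + 2 := ⟨k - 2, by omega⟩
    calc (b.pairSwap (i + 1) : A) * ee b (m + 2)
        = b.e * ↑(b.pairSwap (i + 1) * b.pairSwapProd (m + 1)) * ee b (m + 1) := by
          rw [b.ee_succ (m + 1) hkn, Units.val_mul, ← mul_assoc, ← mul_assoc,
            ← (b.commute_e_pairSwap (by omega)).eq]
          simp only [mul_assoc]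
      _ = b.e * b.pairSwapProd (m + 1) * (b.pairSwap i * ee b (m + 1)) := by
          rw [b.pairSwap_succ_mul_pairSwapProd (by omega) (by omega), Units.val_mul]
          simp only [mul_assoc]
      _ = ee b (m + 2) := by
          rw [ih (by omega) (by omega), b.ee_succ (m + 1) hkn]

theorem pairSwapProd_mul_ee {j k : ℕ} (hjk : j < k) (hkn : 2 * k ≤ n) :
    b.pairSwapProd j * ee b k = ee b k := by
  induction j with
  | zero => simp [pairSwapProd]
  | succ j ih =>
    rw [pairSwapProd_succ, Units.val_mul, mul_assoc, b.pairSwap_mul_ee (by omega) hkn,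
      ih (by omega)]

theorem ee_mul_ee_of_le {j k : ℕ} (hjk : j ≤ k) (hkn : 2 * k ≤ n) :
    ee b j * ee b k = (δ : R) ^ j • ee b k := by
  induction j with
  | zero => simp [ee]
  | succ j ih =>
    rw [b.ee_succ j (by omega), mul_assoc, ih (by omega), mul_smul_comm, mul_assoc,
      b.pairSwapProd_mul_ee hjk hkn, b.e_mul_ee (by omega), smul_smul, pow_succ]

theorem ee_mul_ee_of_ge {j k : ℕ} (hkj : k ≤ j) (hjn : 2 * j ≤ n) :
    ee b j * ee b k = (δ : R) ^ k • ee b j := by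
  induction j, hkj using Nat.le_induction with
  | base => exact b.ee_mul_ee_of_le le_rfl hjn
  | succ j _ ih =>
    rw [b.ee_succ j hjn, mul_assoc, ih (by omega), mul_smul_comm]

end QBrauer

/-- Lemma 3.2(d): for `j ≤ k`, `e_{(j)} e_{(k)} = e_{(k)} e_{(j)} = ((r−1)/(q−1))^j e_{(k)}`. -/
theorem ee_mul_ee (b : QBrauer R q r δ n A) (j k : ℕ) (hjk : j ≤ k) (hk : 2*k ≤ n) :
    ee b j * ee b k = ((δ : R) ^ j) • ee b k ∧
    ee b k * ee b j = ((δ : R) ^ j) • ee b k :=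
  ⟨b.ee_mul_ee_of_le hjk hk, b.ee_mul_ee_of_ge hjk hk⟩
end

section
/- Let ω ∈ B*_{k,n} (so that the corresponding Brauer diagram d* = ω e_{(k)} has no crossings among vertical edges and ℓ(d*) = ℓ(ω)) and let π ∈ S_{2k+1,n}, the subgroup of S_n generated by s_{2k+1},...,s_{n-1}. Then ℓ(ωπ) = ℓ(ω) + ℓ(π). -/
/-- The simple transposition `s_i = (i, i+1)`, acting on the vertices `1, …, n` (inside `ℕ`). -/
def simpleT (i : ℕ) : Equiv.Perm ℕ := Equiv.swap i (i + 1)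

/-- `sseq i j = s_i s_{i+1} ⋯ s_j` for `i ≤ j`. -/
def sseq (i j : ℕ) : Equiv.Perm ℕ := ((List.range' i (j + 1 - i)).map simpleT).prod

/-- The factor `t_j`: the identity if `t j = 0`, and `s_{t j, j} = s_{t j} s_{t j + 1} ⋯ s_j`
if `1 ≤ t j ≤ j`. -/
def tfac (t : ℕ → ℕ) (j : ℕ) : Equiv.Perm ℕ := if t j = 0 then 1 else sseq (t j) j

/-- The Coxeter length of `σ ∈ S_n`: the number of inversions
`{(i, j) : 1 ≤ i < j ≤ n, σ j < σ i}`. -/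
def len (n : ℕ) (σ : Equiv.Perm ℕ) : ℕ :=
  ((Finset.Icc 1 n ×ˢ Finset.Icc 1 n).filter fun p => p.1 < p.2 ∧ σ p.2 < σ p.1).card

/-- The vertical factor `s_{f(j+1), j}` (the identity when `f(j+1) = j+1`). -/
def vfac (f : ℕ → ℕ) (j : ℕ) : Equiv.Perm ℕ :=
  if f (j+1) = j + 1 then 1 else sseq (f (j+1)) j

/-- The vertical part `s_{f(n), n-1} s_{f(n-1), n-2} ⋯ s_{f(2k+1), 2k}`. -/
def vertPart (n k : ℕ) (f : ℕ → ℕ) : Equiv.Perm ℕ :=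
  (((List.range' (2*k) (n - 2*k)).reverse).map (vfac f)).prod

/-- The horizontal part `t_{2k-2} t_{2k-4} ⋯ t_2`. -/
def evenPart (k : ℕ) (t : ℕ → ℕ) : Equiv.Perm ℕ :=
  (((List.range (k-1)).map (fun m => tfac t (2*(m+1)))).reverse).prod

/-- The set `B*_{k,n}` of permutations of the form
`ω = s_{f(n), n-1} s_{f(n-1), n-2} ⋯ s_{f(2k+1), 2k} ⋅ s_{i_{2k-2}, 2k-2} ⋯ s_{i_2, 2}` with
`1 ≤ f(j) ≤ j` and `f(2k+1) < f(2k+2) < ⋯ < f(n)` (so that the corresponding Brauer diagram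
`d* = ω e_{(k)}` has no crossings among vertical edges and `ℓ(d*) = ℓ(ω)`). -/
def BstarKN (n k : ℕ) : Set (Equiv.Perm ℕ) :=
  {ω | ∃ f t : ℕ → ℕ,
    (∀ j, 2*k+1 ≤ j → j ≤ n → 1 ≤ f j ∧ f j ≤ j) ∧
    (∀ j j', 2*k+1 ≤ j → j < j' → j' ≤ n → f j < f j') ∧
    (∀ j, t j ≤ j) ∧
    ω = vertPart n k f * evenPart k t}

/-- The subgroup `S_{2k+1,n} ≤ S_n` generated by `s_{2k+1}, …, s_{n-1}`. -/
def Ssub (n k : ℕ) : Subgroup (Equiv.Perm ℕ) :=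
  Subgroup.closure {σ | ∃ i, 2*k+1 ≤ i ∧ i < n ∧ σ = simpleT i}

/-!
Every `π ∈ S_{2k+1,n}` fixes all points outside the interval `[2k+1, n]`, so each inversion
`i < j`, `π j < π i` of `π` has `i, j` (hence `π i, π j`) in that interval. There
`ω = s_{f(n),n-1} ⋯ s_{f(2k+1),2k} ⋯` acts as `a ↦ f a`, which is increasing. So every inversion of
`π` is an inversion of `ω π`, and the other inversions of `ω π`, those on which `π` increases,
are carried by `π` bijectively onto the inversions of `ω`.
-/
open Equiv

lemma Equiv.Perm.list_prod_apply_eq_self {α : Type*} {l : List (Perm α)} {x : α}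
    (h : ∀ σ ∈ l, σ x = x) : l.prod x = x :=
  MulAction.mem_stabilizer_iff.mp <| Subgroup.list_prod_mem _ fun σ hσ =>
    MulAction.mem_stabilizer_iff.mpr (h σ hσ)

lemma Equiv.Perm.mapsTo_of_forall_notMem_apply_eq {α : Type*} {τ : Perm α} {s : Set α}
    (hτ : ∀ x ∉ s, τ x = x) : Set.MapsTo τ s s :=
  fun _ hx => by_contra fun hτx => hτx ((τ.injective (hτ _ hτx)).symm ▸ hx)

lemma Equiv.Perm.mem_of_lt_of_apply_lt_apply {α : Type*} [Preorder α] {s : Set α}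
    (hs : s.OrdConnected) {τ : Perm α} (hτ : ∀ x ∉ s, τ x = x) {i j : α} (hij : i < j)
    (hτij : τ j < τ i) : i ∈ s ∧ j ∈ s := by
  have hmaps := Perm.mapsTo_of_forall_notMem_apply_eq hτ
  have hi : i ∈ s := by
    by_contra hi
    rw [hτ i hi] at hτij
    have hj : j ∈ s := by
      by_contra hj
      rw [hτ j hj] at hτij
      exact lt_asymm hij hτij
    exact hi (hs.out (hmaps hj) hj ⟨hτij.le, hij.le⟩)
  refine ⟨hi, ?_⟩
  by_contra hj
  rw [hτ j hj] at hτij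
  exact hj (hs.out hi (hmaps hi) ⟨hij.le, hτij.le⟩)

section Length

variable {n : ℕ} {σ τ : Perm ℕ}

lemma len_mul_eq_add_of_inversions_preserved
    (hτ : Set.MapsTo τ (Set.Icc 1 n) (Set.Icc 1 n))
    (hτ' : Set.MapsTo ⇑τ⁻¹ (Set.Icc 1 n) (Set.Icc 1 n))
    (hpres : ∀ i ∈ Set.Icc 1 n, ∀ j ∈ Set.Icc 1 n, i < j → τ j < τ i → σ (τ j) < σ (τ i)) :
    len n (σ * τ) = len n σ + len n τ := by
  classical
  have hI : ∀ p : ℕ × ℕ, p ∈ Finset.Icc 1 n ×ˢ Finset.Icc 1 n ↔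
      p.1 ∈ Set.Icc 1 n ∧ p.2 ∈ Set.Icc 1 n := by
    simp
  set S := (Finset.Icc 1 n ×ˢ Finset.Icc 1 n).filter fun p =>
    p.1 < p.2 ∧ (σ * τ) p.2 < (σ * τ) p.1
  have hS : ∀ p, p ∈ S ↔
      p ∈ Finset.Icc 1 n ×ˢ Finset.Icc 1 n ∧ p.1 < p.2 ∧ σ (τ p.2) < σ (τ p.1) :=
    fun _ => Finset.mem_filter
  have hcard_σ : (S.filter fun p => τ p.1 < τ p.2).card = len n σ := by
    refine Finset.card_nbij' (fun p => (τ p.1, τ p.2)) (fun q => (τ⁻¹ q.1, τ⁻¹ q.2)) ?_ ?_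
      (fun p _ => by simp) (fun q _ => by simp)
    · intro p hp
      simp only [Finset.coe_filter, Set.mem_ofPred_eq, hS, hI] at hp ⊢
      exact ⟨⟨hτ hp.1.1.1, hτ hp.1.1.2⟩, hp.2, hp.1.2.2⟩
    · intro q hq
      simp only [Finset.coe_filter, Set.mem_ofPred_eq, hS, hI, Perm.coe_inv,
        apply_symm_apply] at hq ⊢
      obtain ⟨⟨hq₁, hq₂⟩, hlt, hinv⟩ := hq
      refine ⟨⟨⟨hτ' hq₁, hτ' hq₂⟩, ?_, hinv⟩, hlt⟩
      rcases lt_trichotomy (τ.symm q.1) (τ.symm q.2) with h | h | h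
      · exact h
      · exact absurd (τ.symm.injective h) hlt.ne
      · have := hpres _ (hτ' hq₂) _ (hτ' hq₁) h (by simpa using hlt)
        simp only [Perm.coe_inv, apply_symm_apply] at this
        exact absurd hinv this.not_gt
  have hfilter_τ : (S.filter fun p => ¬ τ p.1 < τ p.2) =
      (Finset.Icc 1 n ×ˢ Finset.Icc 1 n).filter fun p => p.1 < p.2 ∧ τ p.2 < τ p.1 := by
    ext p
    simp only [Finset.mem_filter, hS, hI]
    constructor
    · rintro ⟨⟨hp, hlt, -⟩, hτp⟩
      exact ⟨hp, hlt, lt_of_le_of_ne (not_lt.mp hτp) fun h => hlt.ne (τ.injective h).symm⟩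
    · rintro ⟨hp, hlt, hτp⟩
      exact ⟨⟨hp, hlt, hpres _ hp.1 _ hp.2 hlt hτp⟩, not_lt.mpr hτp.le⟩
  rw [len, ← Finset.card_filter_add_card_filter_not (fun p => τ p.1 < τ p.2), hcard_σ,
    hfilter_τ]
  rfl

lemma len_mul_eq_add_of_strictMonoOn {s : Set ℕ} (hs : s.OrdConnected) (hsn : s ⊆ Set.Icc 1 n)
    (hτ : ∀ x ∉ s, τ x = x) (hσ : StrictMonoOn σ s) :
    len n (σ * τ) = len n σ + len n τ := by
  have hτ' : ∀ x ∉ s, τ⁻¹ x = x := fun x hx => Perm.inv_eq_iff_eq.mpr (hτ x hx).symm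
  have hmaps := Perm.mapsTo_of_forall_notMem_apply_eq hτ
  refine len_mul_eq_add_of_inversions_preserved (Perm.mapsTo_of_forall_notMem_apply_eq ?_)
    (Perm.mapsTo_of_forall_notMem_apply_eq ?_) fun i _ j _ hij hτij => ?_
  · exact fun x hx => hτ x fun h => hx (hsn h)
  · exact fun x hx => hτ' x fun h => hx (hsn h)
  obtain ⟨hi, hj⟩ := Perm.mem_of_lt_of_apply_lt_apply hs hτ hij hτij
  exact hσ (hmaps hj) (hmaps hi) hτij

end Length

lemma sseq_apply_eq_self {i j x : ℕ} (hx : x < i ∨ j + 1 < x) : sseq i j x = x :=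
  Perm.list_prod_apply_eq_self fun σ hσ => by
    obtain ⟨e, he, rfl⟩ := List.mem_map.mp hσ
    rw [List.mem_range'_1] at he
    exact swap_apply_of_ne_of_ne (by omega) (by omega)

lemma sseq_apply_succ {i j : ℕ} (hij : i ≤ j) : sseq i j (j + 1) = i := by
  induction j, hij using Nat.le_induction with
  | base => simp [sseq, simpleT]
  | succ j hij ih =>
    have hsplit : sseq i (j + 1) = sseq i j * simpleT (j + 1) := by
      rw [sseq, show j + 1 + 1 - i = j + 1 - i + 1 by omega, List.range'_concat,
        List.map_append, List.prod_append, show i + 1 * (j + 1 - i) = j + 1 by omega]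
      simp [sseq]
    rw [hsplit, Perm.mul_apply, simpleT, swap_apply_right, ih]

lemma vfac_apply_eq_self {f : ℕ → ℕ} {j x : ℕ} (hx : x < f (j + 1) ∨ j + 1 < x) :
    vfac f j x = x := by
  unfold vfac
  split_ifs
  · rfl
  · exact sseq_apply_eq_self hx

lemma vfac_apply_succ {f : ℕ → ℕ} {j : ℕ} (hf : f (j + 1) ≤ j + 1) :
    vfac f j (j + 1) = f (j + 1) := by
  unfold vfac
  split_ifs with h
  · exact h.symm
  · exact sseq_apply_succ (by omega)

-- The factors `vfac f j` with `j + 1 < a` fix `a`, the factor `j = a - 1` sends it to `f a`, and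
-- the later ones fix `f a < f (j + 1)`.
lemma list_prod_vfac_apply {f : ℕ → ℕ} {b a : ℕ} : ∀ {m : ℕ},
    (∀ j ∈ Set.Icc (b + 1) (b + m), f j ≤ j) → StrictMonoOn f (Set.Icc (b + 1) (b + m)) →
    a ∈ Set.Icc (b + 1) (b + m) → (((List.range' b m).reverse).map (vfac f)).prod a = f a
  | 0, _, _, ha => by obtain ⟨h₁, h₂⟩ := ha; omega
  | m + 1, hf, hmono, ha => by
    rw [List.range'_concat, List.reverse_append, one_mul]
    simp only [List.reverse_singleton, List.singleton_append, List.map_cons, List.prod_cons,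
      Perm.mul_apply]
    rcases Nat.lt_or_ge a (b + m + 1) with ha' | ha'
    · have hsub : Set.Icc (b + 1) (b + m) ⊆ Set.Icc (b + 1) (b + (m + 1)) :=
        Set.Icc_subset_Icc_right (by omega)
      rw [list_prod_vfac_apply (fun j hj => hf j (hsub hj)) (hmono.mono hsub) ⟨ha.1, by omega⟩]
      exact vfac_apply_eq_self (Or.inl (hmono ⟨ha.1, by omega⟩ ⟨by omega, le_rfl⟩ ha'))
    · obtain rfl : a = b + m + 1 := by have := ha.2; omega
      rw [Perm.list_prod_apply_eq_self fun σ hσ => ?_]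
      · exact vfac_apply_succ (hf _ ha)
      · obtain ⟨j, hj, rfl⟩ := List.mem_map.mp hσ
        rw [List.mem_reverse, List.mem_range'_1] at hj
        exact vfac_apply_eq_self (Or.inr (by omega))

lemma vertPart_apply {n k : ℕ} {f : ℕ → ℕ} (hf : ∀ j ∈ Set.Icc (2 * k + 1) n, f j ≤ j)
    (hmono : StrictMonoOn f (Set.Icc (2 * k + 1) n)) {a : ℕ} (ha : a ∈ Set.Icc (2 * k + 1) n) :
    vertPart n k f a = f a := by
  have hn : 2 * k + (n - 2 * k) = n := by obtain ⟨h₁, h₂⟩ := ha; omega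
  rw [← hn] at hf hmono ha
  exact list_prod_vfac_apply hf hmono ha

lemma evenPart_apply_of_le {k : ℕ} {t : ℕ → ℕ} {x : ℕ} (hx : 2 * k ≤ x) : evenPart k t x = x :=
  Perm.list_prod_apply_eq_self fun σ hσ => by
    obtain ⟨m, hm, rfl⟩ := List.mem_map.mp (List.mem_reverse.mp hσ)
    rw [List.mem_range] at hm
    unfold tfac
    split_ifs
    · rfl
    · exact sseq_apply_eq_self (Or.inr (by omega))

lemma strictMonoOn_of_mem_BstarKN {n k : ℕ} {ω : Perm ℕ} (hω : ω ∈ BstarKN n k) :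
    StrictMonoOn ω (Set.Icc (2 * k + 1) n) := by
  obtain ⟨f, t, hf, hmono, -, rfl⟩ := hω
  have hf_mono : StrictMonoOn f (Set.Icc (2 * k + 1) n) :=
    fun a ha b hb hab => hmono a b ha.1 hab hb.2
  refine hf_mono.congr fun a ha => ?_
  rw [Perm.mul_apply, evenPart_apply_of_le (by have := ha.1; omega),
    vertPart_apply (fun j hj => (hf j hj.1 hj.2).2) hf_mono ha]

lemma apply_eq_self_of_mem_Ssub {n k : ℕ} {π : Perm ℕ} (hπ : π ∈ Ssub n k) {x : ℕ}
    (hx : x ∉ Set.Icc (2 * k + 1) n) : π x = x := by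
  have hle : Ssub n k ≤ fixingSubgroup (Perm ℕ) (Set.Icc (2 * k + 1) n)ᶜ := by
    refine (Subgroup.closure_le _).mpr ?_
    rintro _ ⟨i, hi, hin, rfl⟩
    refine mem_fixingSubgroup_iff _ |>.mpr fun y hy => ?_
    simp only [Set.mem_compl_iff, Set.mem_Icc, not_and_or, not_le] at hy
    exact swap_apply_of_ne_of_ne (by omega) (by omega)
  exact (mem_fixingSubgroup_iff _).mp (hle hπ) x hx

theorem len_mul_of_BstarKN_general (n k : ℕ) (ω π : Equiv.Perm ℕ)
    (hω : ω ∈ BstarKN n k) (hπ : π ∈ Ssub n k) :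
    len n (ω * π) = len n ω + len n π :=
  len_mul_eq_add_of_strictMonoOn Set.ordConnected_Icc (Set.Icc_subset_Icc_left (by omega))
    (fun _ hx => apply_eq_self_of_mem_Ssub hπ hx) (strictMonoOn_of_mem_BstarKN hω)

/-- For `ω ∈ B*_{k,n}` and `π ∈ S_{2k+1,n}`, lengths add: `ℓ(ωπ) = ℓ(ω) + ℓ(π)`. -/
theorem len_mul_of_BstarKN (n k : ℕ) (h : 2*k ≤ n) (ω π : Equiv.Perm ℕ)
    (hω : ω ∈ BstarKN n k) (hπ : π ∈ Ssub n k) :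
    len n (ω * π) = len n ω + len n π :=
  len_mul_of_BstarKN_general n k ω π hω hπ
end
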